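/- Suppose H : X → X̃ is a uniformly continuous bijection between metric spaces intertwining semiflows φ on X and φ̃ on X̃ (i.e., φ̃_t ∘ H = H ∘ φ_t for all t ≥ 0). Then ĥ_s(φ̃) ≤ ĥ_s(φ) and ĥ_r(φ̃) ≤ ĥ_r(φ). -/

import Mathlib

open Set Filter
open scoped ENNReal NNReal Classical Real


open Set Filter

variable {α : Type*}

/-- A (not necessarily continuous) semiflow on `α`, parameterized by nonnegative real times. -/
def IsSemiflow (φ : ℝ → α → α) : Prop :=
  (∀ x, φ 0 x = x) ∧ ∀ s t : ℝ, 0 ≤ s → 0 ≤ t → ∀ x, φ (s + t) x = φ s (φ t x)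

/-- A continuous semiflow. -/
def IsContSemiflow [TopologicalSpace α] (φ : ℝ → α → α) : Prop :=
  IsSemiflow φ ∧ ContinuousOn (fun p : ℝ × α => φ p.1 p.2) (Set.Ici 0 ×ˢ Set.univ)

/-- The pseudosemimetric `d_δ^φ(x,y) = inf { d(φ_s x, φ_s y) : s ∈ [0,δ) }`. -/
noncomputable def dDelta (d : α → α → ℝ) (φ : ℝ → α → α) (δ : ℝ) (x y : α) : ℝ :=
  sInf ((fun s => d (φ s x) (φ s y)) '' Set.Ico 0 δ)

/-- The modified dynamical ball `B̂(x,φ,T,ε,δ)`. -/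
def ballHat (d : α → α → ℝ) (φ : ℝ → α → α) (T ε δ : ℝ) (x : α) : Set α :=
  {y | ∀ t ∈ Set.Icc (0:ℝ) T, dDelta d φ δ (φ t x) (φ t y) < ε}

/-- The classical Bowen dynamical ball `B(x,φ,T,ε)`. -/
def ballB (d : α → α → ℝ) (φ : ℝ → α → α) (T ε : ℝ) (x : α) : Set α :=
  {y | ∀ t ∈ Set.Icc (0:ℝ) T, d (φ t x) (φ t y) < ε}

/-- `(φ,T,ε,δ)`-separated set. -/
def sepHat (d : α → α → ℝ) (φ : ℝ → α → α) (T ε δ : ℝ) (E : Set α) : Prop :=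
  ∀ x ∈ E, E ∩ ballHat d φ T ε δ x = {x}

/-- `(φ,T,ε,δ)`-spanning set for the subset `S`. -/
def spanHat (d : α → α → ℝ) (φ : ℝ → α → α) (S : Set α) (T ε δ : ℝ) (F : Set α) : Prop :=
  F ⊆ S ∧ S ⊆ ⋃ y ∈ F, ballHat d φ T ε δ y

/-- Classical `(φ,T,ε)`-separated set. -/
def sepB (d : α → α → ℝ) (φ : ℝ → α → α) (T ε : ℝ) (E : Set α) : Prop :=
  ∀ x ∈ E, E ∩ ballB d φ T ε x = {x}

/-- Classical `(φ,T,ε)`-spanning set for the subset `S`. -/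
def spanB (d : α → α → ℝ) (φ : ℝ → α → α) (S : Set α) (T ε : ℝ) (F : Set α) : Prop :=
  F ⊆ S ∧ S ⊆ ⋃ y ∈ F, ballB d φ T ε y

/-- `ŝ(φ,T,ε,δ)`: sup of cardinalities of separated subsets of `S`. -/
noncomputable def sHat (d : α → α → ℝ) (φ : ℝ → α → α) (S : Set α) (T ε δ : ℝ) : ℕ∞ :=
  ⨆ (E : Set α) (_ : E ⊆ S ∧ sepHat d φ T ε δ E), E.encard

/-- `r̂(φ,T,ε,δ)`: inf of cardinalities of spanning sets. -/
noncomputable def rHat (d : α → α → ℝ) (φ : ℝ → α → α) (S : Set α) (T ε δ : ℝ) : ℕ∞ :=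
  ⨅ (F : Set α) (_ : spanHat d φ S T ε δ F), F.encard

noncomputable def sB (d : α → α → ℝ) (φ : ℝ → α → α) (S : Set α) (T ε : ℝ) : ℕ∞ :=
  ⨆ (E : Set α) (_ : E ⊆ S ∧ sepB d φ T ε E), E.encard

noncomputable def rB (d : α → α → ℝ) (φ : ℝ → α → α) (S : Set α) (T ε : ℝ) : ℕ∞ :=
  ⨅ (F : Set α) (_ : spanB d φ S T ε F), F.encard

/-- Extended logarithm on `ℕ∞`, with `log ∞ = ∞` and `log 0 = -∞`. -/
noncomputable def elog (x : ℕ∞) : EReal :=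
  if x = ⊤ then ⊤ else if x = 0 then ⊥ else ((Real.log (x.toNat : ℝ) : ℝ) : EReal)

/-- Exponential growth rate `limsup_{T→∞} (1/T) log f(T)`. -/
noncomputable def rate (f : ℝ → ℕ∞) : EReal :=
  Filter.limsup (fun T : ℝ => ((T⁻¹ : ℝ) : EReal) * elog (f T)) Filter.atTop

/-- The modified separated-set entropy `ĥ_s(φ)` (on the subset `S`); since the quantities are
monotone in `ε` and `δ`, the limits `ε → 0⁺`, `δ → 0⁺` are suprema. -/
noncomputable def hHatS (d : α → α → ℝ) (φ : ℝ → α → α) (S : Set α) : EReal :=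
  ⨆ (δ : ℝ) (_ : 0 < δ) (ε : ℝ) (_ : 0 < ε), rate (fun T => sHat d φ S T ε δ)

/-- The modified spanning-set entropy `ĥ_r(φ)`. -/
noncomputable def hHatR (d : α → α → ℝ) (φ : ℝ → α → α) (S : Set α) : EReal :=
  ⨆ (δ : ℝ) (_ : 0 < δ) (ε : ℝ) (_ : 0 < ε), rate (fun T => rHat d φ S T ε δ)

/-- Bowen's classical separated-set entropy `h_s(φ)`. -/
noncomputable def hSB (d : α → α → ℝ) (φ : ℝ → α → α) (S : Set α) : EReal :=
  ⨆ (ε : ℝ) (_ : 0 < ε), rate (fun T => sB d φ S T ε)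

/-- Bowen's classical spanning-set entropy `h_r(φ)`. -/
noncomputable def hRB (d : α → α → ℝ) (φ : ℝ → α → α) (S : Set α) : EReal :=
  ⨆ (ε : ℝ) (_ : 0 < ε), rate (fun T => rB d φ S T ε)


/-!
A uniformly continuous `H` intertwining the semiflows maps modified dynamical balls of `φ` of
radius `η` into those of `ψ` of radius `ε`, for `η` a modulus of uniform continuity for `ε`:
a time `s ∈ [0, δ)` at which `φ_s` brings two points `η`-close is one at which `ψ_s` brings their
images `ε`-close. Hence `H` maps spanning sets to spanning sets, and, being injective, pulls
separated sets back to separated sets of the same cardinality; so every count for `ψ` at scale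
`ε` is dominated by the corresponding count for `φ` at scale `η`, and taking rates and suprema
gives the two inequalities.
-/

lemma elog_mono : Monotone elog := by
  intro x y h
  unfold elog
  rcases eq_or_ne y ⊤ with hy | hy
  · simp [hy]
  have hx : x ≠ ⊤ := ne_top_of_le_ne_top hy h
  rw [if_neg hx, if_neg hy]
  rcases eq_or_ne x 0 with hx0 | hx0
  · simp [hx0]
  have hy0 : y ≠ 0 := fun hy0 => hx0 (le_antisymm (hy0 ▸ h) zero_le)
  rw [if_neg hx0, if_neg hy0]
  have hx_pos : 0 < x.toNat := Nat.pos_of_ne_zero fun h0 => (ENat.toNat_eq_zero.mp h0).elim hx0 hx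
  exact EReal.coe_le_coe_iff.mpr
    (Real.log_le_log (by exact_mod_cast hx_pos) (by exact_mod_cast ENat.toNat_le_toNat h hy))

lemma rate_mono {f g : ℝ → ℕ∞} (h : f ≤ g) : rate f ≤ rate g := by
  apply limsup_le_limsup
  · filter_upwards [eventually_ge_atTop (0 : ℝ)] with T hT
    have hT_inv : (0 : EReal) ≤ ((T⁻¹ : ℝ) : EReal) := by exact_mod_cast inv_nonneg.mpr hT
    exact mul_le_mul_of_nonneg_left (elog_mono (h T)) hT_inv
  · exact isCoboundedUnder_le_of_le _ fun _ => bot_le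
  · exact ⟨⊤, Eventually.of_forall fun _ => le_top⟩

lemma iSup_iSup_rate_le {f g : ℝ → ℝ → ℝ → ℕ∞}
    (h : ∀ δ > 0, ∀ ε > 0, ∃ η > 0, ∀ T, f δ ε T ≤ g δ η T) :
    ⨆ (δ : ℝ) (_ : 0 < δ) (ε : ℝ) (_ : 0 < ε), rate (f δ ε) ≤
      ⨆ (δ : ℝ) (_ : 0 < δ) (ε : ℝ) (_ : 0 < ε), rate (g δ ε) := by
  refine iSup₂_le fun δ hδ => iSup₂_le fun ε hε => ?_
  obtain ⟨η, hη, hfg⟩ := h δ hδ ε hε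
  exact le_iSup₂_of_le δ hδ (le_iSup₂_of_le η hη (rate_mono hfg))

section Balls

variable {X Y : Type*} [PseudoMetricSpace X] [PseudoMetricSpace Y]
  {φ : ℝ → X → X} {ψ : ℝ → Y → Y} {H : X → Y} {T ε η δ : ℝ}

lemma dDelta_self (φ : ℝ → X → X) (hδ : 0 < δ) (x : X) : dDelta dist φ δ x x = 0 := by
  have hbdd : BddBelow ((fun s => dist (φ s x) (φ s x)) '' Ico 0 δ) :=
    ⟨0, by rintro _ ⟨s, _, rfl⟩; exact dist_nonneg⟩
  exact le_antisymm (csInf_le hbdd ⟨0, ⟨le_rfl, hδ⟩, dist_self _⟩)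
    (le_csInf ⟨_, 0, ⟨le_rfl, hδ⟩, rfl⟩ (by rintro _ ⟨s, _, rfl⟩; exact dist_nonneg))

lemma mem_ballHat_self (φ : ℝ → X → X) (hδ : 0 < δ) (hε : 0 < ε) (x : X) :
    x ∈ ballHat dist φ T ε δ x := fun t _ => by
  rw [dDelta_self φ hδ]
  exact hε

lemma dDelta_lt_of_intertwine (hconj : ∀ t, 0 ≤ t → ∀ x, ψ t (H x) = H (φ t x))
    (hδ : 0 < δ) (hmod : ∀ ⦃a b : X⦄, dist a b < η → dist (H a) (H b) < ε) {x y : X}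
    (h : dDelta dist φ δ x y < η) : dDelta dist ψ δ (H x) (H y) < ε := by
  obtain ⟨_, ⟨s, hs, rfl⟩, hs_lt⟩ := exists_lt_of_csInf_lt ((nonempty_Ico.mpr hδ).image _) h
  have hbdd : BddBelow ((fun s => dist (ψ s (H x)) (ψ s (H y))) '' Ico 0 δ) :=
    ⟨0, by rintro _ ⟨u, _, rfl⟩; exact dist_nonneg⟩
  calc dDelta dist ψ δ (H x) (H y) ≤ dist (ψ s (H x)) (ψ s (H y)) := csInf_le hbdd ⟨s, hs, rfl⟩
    _ = dist (H (φ s x)) (H (φ s y)) := by rw [hconj s hs.1, hconj s hs.1]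
    _ < ε := hmod hs_lt

lemma mapsTo_ballHat_of_intertwine (hconj : ∀ t, 0 ≤ t → ∀ x, ψ t (H x) = H (φ t x))
    (hδ : 0 < δ) (hmod : ∀ ⦃a b : X⦄, dist a b < η → dist (H a) (H b) < ε) (x : X) :
    MapsTo H (ballHat dist φ T η δ x) (ballHat dist ψ T ε δ (H x)) := fun y hy t ht => by
  rw [hconj t ht.1, hconj t ht.1]
  exact dDelta_lt_of_intertwine hconj hδ hmod (hy t ht)

lemma UniformContinuous.exists_mapsTo_ballHat (huc : UniformContinuous H)
    (hconj : ∀ t, 0 ≤ t → ∀ x, ψ t (H x) = H (φ t x)) (hδ : 0 < δ) (hε : 0 < ε) :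
    ∃ η > 0, ∀ T x, MapsTo H (ballHat dist φ T η δ x) (ballHat dist ψ T ε δ (H x)) := by
  obtain ⟨η, hη, hmod⟩ := Metric.uniformContinuous_iff.mp huc ε hε
  exact ⟨η, hη, fun T => mapsTo_ballHat_of_intertwine hconj hδ hmod⟩

variable (hmaps : ∀ x, MapsTo H (ballHat dist φ T η δ x) (ballHat dist ψ T ε δ (H x)))
include hmaps

lemma sepHat_preimage (hinj : H.Injective) (hδ : 0 < δ) (hη : 0 < η) {E : Set Y}
    (hE : sepHat dist ψ T ε δ E) : sepHat dist φ T η δ (H ⁻¹' E) := by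
  refine fun x hx => eq_singleton_iff_unique_mem.mpr ⟨⟨hx, mem_ballHat_self φ hδ hη x⟩, ?_⟩
  rintro y ⟨hyE, hy⟩
  have hHy : H y ∈ E ∩ ballHat dist ψ T ε δ (H x) := ⟨hyE, hmaps x hy⟩
  rw [hE (H x) hx] at hHy
  exact hinj hHy

lemma spanHat_image {S F : Set X} (hF : spanHat dist φ S T η δ F) :
    spanHat dist ψ (H '' S) T ε δ (H '' F) := by
  refine ⟨image_mono hF.1, ?_⟩
  rintro _ ⟨x, hx, rfl⟩
  obtain ⟨y, hy, hxy⟩ := mem_iUnion₂.mp (hF.2 hx)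
  exact mem_iUnion₂.mpr ⟨H y, mem_image_of_mem H hy, hmaps y hxy⟩

lemma sHat_image_le (hinj : H.Injective) (hδ : 0 < δ) (hη : 0 < η) (S : Set X) :
    sHat dist ψ (H '' S) T ε δ ≤ sHat dist φ S T η δ := by
  refine iSup₂_le fun E ⟨hES, hE⟩ => ?_
  have hcard : (H ⁻¹' E).encard = E.encard :=
    encard_preimage_of_injective_subset_range hinj (hES.trans (image_subset_range H S))
  have hsub : H ⁻¹' E ⊆ S := (preimage_mono hES).trans (preimage_image_eq S hinj).subset
  exact le_iSup₂_of_le (H ⁻¹' E) ⟨hsub, sepHat_preimage hmaps hinj hδ hη hE⟩ hcard.ge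

lemma rHat_image_le (S : Set X) : rHat dist ψ (H '' S) T ε δ ≤ rHat dist φ S T η δ :=
  le_iInf₂ fun F hF =>
    (iInf₂_le (H '' F) (spanHat_image hmaps hF)).trans (encard_image_le H F)

end Balls

theorem stmt10_general {X Y : Type*} [MetricSpace X] [MetricSpace Y]
    (φ : ℝ → X → X) (ψ : ℝ → Y → Y)
    (H : X → Y) (hbij : Function.Bijective H) (huc : UniformContinuous H)
    (hconj : ∀ t : ℝ, 0 ≤ t → ∀ x : X, ψ t (H x) = H (φ t x)) :
    hHatS dist ψ Set.univ ≤ hHatS dist φ Set.univ ∧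
    hHatR dist ψ Set.univ ≤ hHatR dist φ Set.univ := by
  have himage : H '' univ = univ := image_univ_of_surjective hbij.2
  constructor
  · refine iSup_iSup_rate_le fun δ hδ ε hε => ?_
    obtain ⟨η, hη, hmaps⟩ := huc.exists_mapsTo_ballHat hconj hδ hε
    refine ⟨η, hη, fun T => ?_⟩
    simpa only [himage] using sHat_image_le (hmaps T) hbij.1 hδ hη univ
  · refine iSup_iSup_rate_le fun δ hδ ε hε => ?_
    obtain ⟨η, hη, hmaps⟩ := huc.exists_mapsTo_ballHat hconj hδ hε
    refine ⟨η, hη, fun T => ?_⟩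
    simpa only [himage] using rHat_image_le (hmaps T) univ

/-- If `H : X → X̃` is a uniformly continuous bijection intertwining the
semiflows `φ` and `φ̃`, then `ĥ_s(φ̃) ≤ ĥ_s(φ)` and `ĥ_r(φ̃) ≤ ĥ_r(φ)`. -/
theorem stmt10 {X Y : Type*} [MetricSpace X] [MetricSpace Y]
    (φ : ℝ → X → X) (ψ : ℝ → Y → Y) (hφ : IsSemiflow φ) (hψ : IsSemiflow ψ)
    (H : X → Y) (hbij : Function.Bijective H) (huc : UniformContinuous H)
    (hconj : ∀ t : ℝ, 0 ≤ t → ∀ x : X, ψ t (H x) = H (φ t x)) :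
    hHatS dist ψ Set.univ ≤ hHatS dist φ Set.univ ∧
    hHatR dist ψ Set.univ ≤ hHatR dist φ Set.univ :=
  stmt10_general φ ψ H hbij huc hconj
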